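/- For the sparse-histogram RDP mechanism with 2k ≤ γn: if the input histogram θ has support of size r < k (θ = (θ_1,...,θ_r,0,...,0) with all θ_j > 0), then the projected release δ(z) satisfies ‖θ − δ(z)‖_1 = O_P(r/(αn)). -/

import Mathlib

open MeasureTheory

def IsHist (n k : ℕ) (θ : Fin k → ℝ) : Prop :=
  (∀ j, ∃ m : ℕ, θ j = (m : ℝ) / n) ∧ (∑ j, θ j) = 1

noncomputable def l1 {k : ℕ} (θ θ' : Fin k → ℝ) : ℝ := ∑ j, |θ j - θ' j|

open Classical in
/-- Sparse-histogram noise: empty bins kept exact, occupied bins get Laplace noise. -/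
noncomputable def noised {k : ℕ} (n : ℕ) (α : ℝ) (θ : Fin k → ℝ) (L : Fin k → ℝ) :
    Fin k → ℝ :=
  fun j => if θ j = 0 then θ j else θ j + 2 * L j / ((n : ℝ) * α)

/-! Projecting `z` onto a set containing `θ` at most doubles the `ℓ₁` distance to `θ`, and
`‖θ - z‖₁` is `2/(nα)` times the sum of the `|L_j|` over the support of `θ`, whose expectation
is the support size. Markov's inequality then gives the `O_P(r/(αn))` bound with `C = 4/ε`. -/

section L1

variable {k : ℕ}

lemma l1_comm (θ θ' : Fin k → ℝ) : l1 θ θ' = l1 θ' θ := by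
  simp only [l1, abs_sub_comm]

lemma l1_le_l1_add_l1 (θ z w : Fin k → ℝ) : l1 θ w ≤ l1 θ z + l1 z w := by
  rw [l1, l1, l1, ← Finset.sum_add_distrib]
  exact Finset.sum_le_sum fun j _ => abs_sub_le _ _ _

lemma l1_le_two_mul_of_l1_le {θ z w : Fin k → ℝ} (h : l1 w z ≤ l1 θ z) :
    l1 θ w ≤ 2 * l1 θ z := by
  linarith [l1_le_l1_add_l1 θ z w, l1_comm z w]

open Classical in
lemma l1_noised (n : ℕ) (α : ℝ) (θ L : Fin k → ℝ) :
    l1 θ (noised n α θ L) = 2 / |n * α| * ∑ j ∈ Finset.univ.filter (θ · ≠ 0), |L j| := by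
  rw [l1, Finset.sum_filter, Finset.mul_sum]
  refine Finset.sum_congr rfl fun j _ => ?_
  by_cases hj : θ j = 0
  · simp [noised, hj]
  · simp only [noised, hj, ne_eq, not_false_eq_true, if_true, if_false, sub_add_cancel_left,
      abs_neg, abs_div, abs_mul, abs_two]
    ring

open Classical in
lemma l1_le_of_l1_noised_le {n : ℕ} {α : ℝ} (hnα : 0 < n * α) {θ w L : Fin k → ℝ}
    (hw : l1 w (noised n α θ L) ≤ l1 θ (noised n α θ L)) :
    l1 θ w ≤ 4 / (n * α) * ∑ j ∈ Finset.univ.filter (θ · ≠ 0), |L j| := by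
  have h := l1_le_two_mul_of_l1_le hw
  rw [l1_noised, abs_of_pos hnα] at h
  exact h.trans_eq (by ring)

end L1

lemma lintegral_abs_laplace :
    ∫⁻ t, ENNReal.ofReal |t|
      ∂(volume.withDensity fun t => ENNReal.ofReal ((1 / 2) * Real.exp (-|t|))) = 1 := by
  rw [lintegral_withDensity_eq_lintegral_mul _ (by fun_prop) (by fun_prop)]
  simp_rw [Pi.mul_apply, ← ENNReal.ofReal_mul (by positivity : (0 : ℝ) ≤ 1 / 2 * Real.exp _)]
  rw [← ENNReal.toReal_eq_one_iff, ← integral_eq_lintegral_of_nonneg_ae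
    (Filter.Eventually.of_forall fun t => by positivity) (by fun_prop)]
  have hGamma : ∫ x in Set.Ioi (0 : ℝ), Real.exp (-x) * x = 1 := by
    have h := (Real.Gamma_eq_integral two_pos).symm.trans Real.Gamma_two
    norm_num at h
    exact h
  calc ∫ t, 1 / 2 * Real.exp (-|t|) * |t|
      = 2 * ∫ x in Set.Ioi (0 : ℝ), 1 / 2 * (Real.exp (-x) * x) := by
        simp only [mul_assoc]
        exact integral_comp_abs (f := fun x => 1 / 2 * (Real.exp (-x) * x))
    _ = 1 := by rw [integral_const_mul, hGamma]; norm_num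

lemma lintegral_sum_abs_pi {ι : Type*} [Fintype ι] (μ : Measure ℝ) [IsProbabilityMeasure μ]
    (s : Finset ι) :
    ∫⁻ L, ∑ j ∈ s, ENNReal.ofReal |L j| ∂(Measure.pi fun _ : ι => μ)
      = s.card * ∫⁻ t, ENNReal.ofReal |t| ∂μ := by
  rw [lintegral_finsetSum _ fun j _ => (measurable_pi_apply j).abs.ennreal_ofReal]
  simp only [(measurePreserving_eval (fun _ : ι => μ) _).lintegral_comp
    measurable_abs.ennreal_ofReal, Finset.sum_const, nsmul_eq_mul]

lemma pi_measure_le_sum_abs_le {ι : Type*} [Fintype ι] (μ : Measure ℝ) [IsProbabilityMeasure μ]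
    (s : Finset ι) {c : ℝ} (hc : 0 < c) :
    (Measure.pi fun _ : ι => μ) {L | c ≤ ∑ j ∈ s, |L j|}
      ≤ s.card * (∫⁻ t, ENNReal.ofReal |t| ∂μ) / ENNReal.ofReal c := by
  rw [← lintegral_sum_abs_pi]
  refine le_trans (measure_mono fun L (hL : c ≤ _) => ?_) (meas_ge_le_lintegral_div
    (Measurable.aemeasurable (by fun_prop)) (ENNReal.ofReal_pos.2 hc).ne' ENNReal.ofReal_ne_top)
  show ENNReal.ofReal c ≤ ∑ j ∈ s, ENNReal.ofReal |L j|
  rw [← ENNReal.ofReal_sum_of_nonneg fun j _ => abs_nonneg _]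
  exact ENNReal.ofReal_le_ofReal hL

open Classical in
lemma card_filter_ne_zero_le {k r : ℕ} {θ : Fin k → ℝ} (hθ : ∀ j : Fin k, r ≤ (j : ℕ) → θ j = 0) :
    (Finset.univ.filter (θ · ≠ 0)).card ≤ r := by
  calc (Finset.univ.filter (θ · ≠ 0)).card ≤ (Finset.range r).card :=
        Finset.card_le_card_of_injOn Fin.val
          (fun j hj => Finset.mem_range.2 (not_le.1 fun h => (Finset.mem_filter.1 hj).2 (hθ j h)))
          Fin.val_injective.injOn
    _ = r := Finset.card_range r

/-- **Accuracy of the projected sparse-histogram RDP release.** Assume `2k ≤ γn`. If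
the input histogram `θ` is supported on its first `r < k` coordinates (all positive
there), and `δ` is an `ℓ₁` projection onto lattice histograms, then
`‖θ - δ(z)‖₁ = O_P(r/(αn))`: for every `ε > 0` there is `C` (uniform in all the
parameters) with `P(‖θ - δ(z)‖₁ > C r/(αn)) ≤ ε`. -/
theorem stmt12 (lap : Measure ℝ) [IsProbabilityMeasure lap]
    (hlap : lap = volume.withDensity fun t => ENNReal.ofReal ((1 / 2) * Real.exp (-|t|))) :
    ∀ ε : ℝ, 0 < ε → ∃ C : ℝ,
      ∀ (n k r : ℕ) (α γ : ℝ), 0 < n → 0 < α → 2 * (k : ℝ) ≤ γ * n → r < k →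
        ∀ θ : Fin k → ℝ, IsHist n k θ →
          (∀ j : Fin k, r ≤ (j : ℕ) → θ j = 0) →
          (∀ j : Fin k, (j : ℕ) < r → 0 < θ j) →
          ∀ δ : (Fin k → ℝ) → (Fin k → ℝ),
            (∀ z : Fin k → ℝ, IsHist n k (δ z) ∧
              ∀ θ' : Fin k → ℝ, IsHist n k θ' → l1 (δ z) z ≤ l1 θ' z) →
            (Measure.pi fun _ : Fin k => lap)
                {L | C * r / (α * n) < l1 θ (δ (noised n α θ L))}
              ≤ ENNReal.ofReal ε := by
  classical
  intro ε hε
  refine ⟨4 / ε, fun n k r α γ hn hα _ _ θ hθ hzero _ δ hδ => ?_⟩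
  set s := Finset.univ.filter (θ · ≠ 0)
  have hs : s.card ≤ r := card_filter_ne_zero_le hzero
  have hs_pos : 0 < s.card := Finset.card_pos.2 <| Finset.filter_nonempty_iff.2 <|
    Finset.exists_ne_zero_of_sum_ne_zero (hθ.2 ▸ one_ne_zero)
  have hr : (0 : ℝ) < r := by exact_mod_cast hs_pos.trans_le hs
  have hαn : 0 < α * n := mul_pos hα (by exact_mod_cast hn)
  have hevent : {L | 4 / ε * r / (α * n) < l1 θ (δ (noised n α θ L))}
      ⊆ {L | r / ε ≤ ∑ j ∈ s, |L j|} := fun L hL => by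
    have hproj := l1_le_of_l1_noised_le (by rwa [mul_comm]) ((hδ (noised n α θ L)).2 θ hθ)
    have : 4 * (r / ε) / (α * n) < 4 * (∑ j ∈ s, |L j|) / (α * n) :=
      lt_of_eq_of_lt (by ring) (lt_of_lt_of_le hL (hproj.trans_eq (by ring)))
    rw [div_lt_div_iff_of_pos_right hαn] at this
    exact (lt_of_mul_lt_mul_left this zero_le_four).le
  calc _ ≤ (Measure.pi fun _ : Fin k => lap) {L | r / ε ≤ ∑ j ∈ s, |L j|} := measure_mono hevent
    _ ≤ s.card * (∫⁻ t, ENNReal.ofReal |t| ∂lap) / ENNReal.ofReal (r / ε) :=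
      pi_measure_le_sum_abs_le lap s (div_pos hr hε)
    _ ≤ ENNReal.ofReal ε := by
      rw [hlap, lintegral_abs_laplace, mul_one, ← ENNReal.ofReal_natCast,
        ← ENNReal.ofReal_div_of_pos (div_pos hr hε)]
      refine ENNReal.ofReal_le_ofReal ?_
      rw [div_div_eq_mul_div, div_le_iff₀ hr, mul_comm ε]
      gcongr
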